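/- arXiv:2402.02630 — 5 statements merged into one kernel-verified Lean document; each statement's English description precedes it below -/
import Mathlib

section
/- If in an IF behavior an icheck(p, v, τ) event at position j returns true, then there exists an earlier position i < j at which an iattest(v) event was executed by principal p with result τ. -/
/-! IF attestation model: atlog maps (principal, value) to tags. -/

inductive Cmd (P V T : Type) where
  | iattest (v : V)
  | icheck (ps : P) (v : V) (τ : T)

inductive Res (T : Type) where
  | tag (τ : T)
  | bool (b : Bool)

structure Event (P V T : Type) where
  cmd : Cmd P V T
  prin : P
  res : Res T

abbrev AtState (P V T : Type) := P → V → Option T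

inductive Step {P V T : Type} [DecidableEq P] [DecidableEq V] [DecidableEq T]
    (F : P → V → T) : AtState P V T → Event P V T → AtState P V T → Prop where
  | attest (σ : AtState P V T) (p : P) (v : V) :
      Step F σ ⟨Cmd.iattest v, p, Res.tag (F p v)⟩
        (fun p' v' => if p' = p ∧ v' = v then some (F p v) else σ p' v')
  | check (σ : AtState P V T) (p ps : P) (v : V) (τ : T) :
      Step F σ ⟨Cmd.icheck ps v τ, p, Res.bool (decide (σ ps v = some τ))⟩ σ

inductive Behavior {P V T : Type} [DecidableEq P] [DecidableEq V] [DecidableEq T]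
    (F : P → V → T) : AtState P V T → List (Event P V T) → AtState P V T → Prop where
  | nil (σ : AtState P V T) : Behavior F σ [] σ
  | cons {σ σ' σ'' : AtState P V T} {e : Event P V T} {es : List (Event P V T)} :
      Step F σ e σ' → Behavior F σ' es σ'' → Behavior F σ (e :: es) σ''

theorem aux_icheck
    {P V T : Type} [DecidableEq P] [DecidableEq V] [DecidableEq T]
    (F : P → V → T) {σ0 σfin : AtState P V T} {α : List (Event P V T)}
    (hβ : Behavior F σ0 α σfin) :
    ∀ (j : ℕ) (hj : j < α.length) (p pj : P) (v : V) (τ : T),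
      α[j]'hj = ⟨Cmd.icheck p v τ, pj, Res.bool true⟩ →
      σ0 p v = some τ ∨ ∃ i, ∃ hij : i < j,
        α[i]'(Nat.lt_trans hij hj) = ⟨Cmd.iattest v, p, Res.tag τ⟩ := by
  induction hβ with
  | nil σ => intro j hj; simp at hj
  | @cons σ σ' σ'' e es hstep _ ih =>
    intro j hj p pj v τ hjc
    match j with
    | 0 =>
      simp only [List.getElem_cons_zero] at hjc
      cases hstep with
      | attest _ _ => simp_all
      | check _ _ _ _ =>
        left
        injection hjc with h1 h2 h3
        injection h1 with hp hv hτ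
        injection h3 with hb
        subst hp; subst hv; subst hτ
        exact of_decide_eq_true hb
    | (j' + 1) =>
      simp only [List.getElem_cons_succ] at hjc
      have hj' : j' < es.length := by simpa using Nat.lt_of_succ_lt_succ hj
      rcases ih j' hj' p pj v τ hjc with h | ⟨i, hij, hi⟩
      · cases hstep with
        | check _ _ _ _ => exact Or.inl h
        | attest p0 v0 =>
          by_cases hc : p = p0 ∧ v = v0
          · right
            refine ⟨0, Nat.succ_pos _, ?_⟩
            simp only [hc, if_pos] at h
            obtain ⟨hp, hv⟩ := hc
            injection h with hFt
            simp [List.getElem_cons_zero, hp, hv, hFt]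
          · left; simpa [hc] using h
      · exact Or.inr ⟨i + 1, Nat.succ_lt_succ hij, hi⟩

/-- if an `icheck p v τ` at position `j` returns `true`, then some earlier
position `i < j` holds an `iattest v` executed by `p` with result `τ`. -/
theorem icheck_true_implies_iattest
    {P V T : Type} [DecidableEq P] [DecidableEq V] [DecidableEq T]
    (F : P → V → T) (α : List (Event P V T)) (σfin : AtState P V T)
    (hβ : Behavior F (fun _ _ => none) α σfin)
    (j : ℕ) (hj : j < α.length)
    (p pj : P) (v : V) (τ : T)
    (hjc : α[j]'hj = ⟨Cmd.icheck p v τ, pj, Res.bool true⟩) :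
    ∃ i, ∃ hij : i < j,
      α[i]'(Nat.lt_trans hij hj) = ⟨Cmd.iattest v, p, Res.tag τ⟩ := by
  rcases aux_icheck F hβ j hj p pj v τ hjc with h | h
  · simp at h
  · exact h
end

section
/- If in an IF behavior an iretrieve(p, η) event executed by principal P_r at position j returns value v (not failure), then there exists an earlier position i < j at which an iprotect(P_r, v) event was executed by principal p with result η. -/
/-! IF escrow model: protstore maps (handle, source, recipient) to values. -/

inductive PCmd (P H V : Type) where
  | iprotect (pr : P) (v : V)
  | iretrieve (ps : P) (η : H)

inductive PRes (H V : Type) where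
  | handle (η : H)
  | val (v : V)
  | fail

structure PEvent (P H V : Type) where
  cmd : PCmd P H V
  prin : P
  res : PRes H V

abbrev PState (P H V : Type) := H → P → P → Option V

inductive PStep {P H V : Type} [DecidableEq P] [DecidableEq H] :
    PState P H V → PEvent P H V → PState P H V → Prop where
  | protect (σ : PState P H V) (ps pr : P) (v : V) (η : H)
      (hfresh : ∀ (a b : P), σ η a b = none) :
      PStep σ ⟨PCmd.iprotect pr v, ps, PRes.handle η⟩
        (fun η' a b => if η' = η ∧ a = ps ∧ b = pr then some v else σ η' a b)
  | retrieve_some (σ : PState P H V) (ps pr : P) (η : H) (v : V)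
      (hv : σ η ps pr = some v) :
      PStep σ ⟨PCmd.iretrieve ps η, pr, PRes.val v⟩ σ
  | retrieve_fail (σ : PState P H V) (ps pr : P) (η : H)
      (hv : σ η ps pr = none) :
      PStep σ ⟨PCmd.iretrieve ps η, pr, PRes.fail⟩ σ

inductive PBehavior {P H V : Type} [DecidableEq P] [DecidableEq H] :
    PState P H V → List (PEvent P H V) → PState P H V → Prop where
  | nil (σ : PState P H V) : PBehavior σ [] σ
  | cons {σ σ' σ'' : PState P H V} {e : PEvent P H V} {es : List (PEvent P H V)} :
      PStep σ e σ' → PBehavior σ' es σ'' → PBehavior σ (e :: es) σ''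

theorem aux_retrieve
    {P H V : Type} [DecidableEq P] [DecidableEq H]
    {σ σfin : PState P H V} {α : List (PEvent P H V)}
    (hβ : PBehavior σ α σfin) :
    ∀ (j : ℕ) (hj : j < α.length) (p pr : P) (v : V) (η : H),
      α[j]'hj = ⟨PCmd.iretrieve p η, pr, PRes.val v⟩ →
      σ η p pr = some v ∨ ∃ i, ∃ hij : i < j,
        α[i]'(Nat.lt_trans hij hj) = ⟨PCmd.iprotect pr v, p, PRes.handle η⟩ := by
  induction hβ with
  | nil σ => intro j hj; simp at hj
  | cons hstep hrest ih =>
    intro j hj p pr v η hjc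
    cases j with
    | zero =>
      simp at hjc
      subst hjc
      cases hstep with
      | retrieve_some ps pr η v hv => exact Or.inl hv
    | succ k =>
      simp at hjc
      rcases ih k (by simpa using Nat.lt_of_succ_lt_succ hj) p pr v η hjc with h | ⟨i, hik, hic⟩
      · cases hstep with
        | protect ps pr' v' η' hfresh =>
          by_cases hc : η = η' ∧ p = ps ∧ pr = pr'
          · refine Or.inr ⟨0, Nat.succ_pos _, ?_⟩
            obtain ⟨h1, h2, h3⟩ := hc
            subst h1; subst h2; subst h3
            simp at h
            simp [h]
          · left; simpa [hc] using h
        | retrieve_some ps' pr' η' v' hv => exact Or.inl h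
        | retrieve_fail ps' pr' η' hv => exact Or.inl h
      · exact Or.inr ⟨i + 1, Nat.succ_lt_succ hik, by simpa using hic⟩

/-- if an `iretrieve p η` executed by `pr` at position `j` returns value `v`,
then some earlier position `i < j` holds an `iprotect pr v` executed by `p` with result `η`. -/
theorem iretrieve_implies_iprotect
    {P H V : Type} [DecidableEq P] [DecidableEq H]
    (α : List (PEvent P H V)) (σfin : PState P H V)
    (hβ : PBehavior (fun _ _ _ => none) α σfin)
    (j : ℕ) (hj : j < α.length)
    (p pr : P) (v : V) (η : H)
    (hjc : α[j]'hj = ⟨PCmd.iretrieve p η, pr, PRes.val v⟩) :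
    ∃ i, ∃ hij : i < j,
      α[i]'(Nat.lt_trans hij hj) = ⟨PCmd.iprotect pr v, p, PRes.handle η⟩ := by
  rcases aux_retrieve hβ j hj p pr v η hjc with h | h
  · simp at h
  · exact h
end

section
/- Partial-function invariant: in any state reachable by an IF behavior, protstore is a partial function, i.e., if (η, P_s, P_r) ↦ v and (η, P_s, P_r) ↦ v' are both in protstore then v = v'; similarly atlog is a partial function on (principal, value) pairs. -/
/-! Set-based IF model: states are pairs of lookup tables (atlog, protstore),
regarded as sets of index ↦ value mappings. -/

structure IFState (P V T H : Type) where
  atlog : Set (P × V × T)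
  prot : Set (H × P × P × V)

inductive SEvent (P V T H : Type) where
  | iattest (p : P) (v : V) (τ : T)
  | icheck (p ps : P) (v : V) (τ : T) (b : Bool)
  | iprotect (ps pr : P) (v : V) (η : H)
  | iretrieve (pr ps : P) (η : H) (r : Option V)

inductive SStep {P V T H : Type} (F : P → V → T) :
    IFState P V T H → SEvent P V T H → IFState P V T H → Prop where
  | attest_new (σ : IFState P V T H) (p : P) (v : V)
      (habs : ∀ τ, (p, v, τ) ∉ σ.atlog) :
      SStep F σ (.iattest p v (F p v)) ⟨insert (p, v, F p v) σ.atlog, σ.prot⟩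
  | attest_old (σ : IFState P V T H) (p : P) (v : V) (τ : T)
      (hin : (p, v, τ) ∈ σ.atlog) :
      SStep F σ (.iattest p v τ) σ
  | check (σ : IFState P V T H) (p ps : P) (v : V) (τ : T) (b : Bool)
      (hb : b = true ↔ (ps, v, τ) ∈ σ.atlog) :
      SStep F σ (.icheck p ps v τ b) σ
  | protect (σ : IFState P V T H) (ps pr : P) (v : V) (η : H)
      (hfresh : ∀ a b w, (η, a, b, w) ∉ σ.prot) :
      SStep F σ (.iprotect ps pr v η) ⟨σ.atlog, insert (η, ps, pr, v) σ.prot⟩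
  | retrieve_some (σ : IFState P V T H) (pr ps : P) (η : H) (v : V)
      (h : (η, ps, pr, v) ∈ σ.prot) :
      SStep F σ (.iretrieve pr ps η (some v)) σ
  | retrieve_fail (σ : IFState P V T H) (pr ps : P) (η : H)
      (h : ∀ v, (η, ps, pr, v) ∉ σ.prot) :
      SStep F σ (.iretrieve pr ps η none) σ

inductive SBehavior {P V T H : Type} (F : P → V → T) :
    IFState P V T H → List (SEvent P V T H) → IFState P V T H → Prop where
  | nil (σ : IFState P V T H) : SBehavior F σ [] σ
  | cons {σ σ' σ'' : IFState P V T H} {e : SEvent P V T H} {es : List (SEvent P V T H)} :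
      SStep F σ e σ' → SBehavior F σ' es σ'' → SBehavior F σ (e :: es) σ''


def IFInv {P V T H : Type} (σ : IFState P V T H) : Prop :=
  (∀ (η : H) (ps pr : P) (v v' : V),
      (η, ps, pr, v) ∈ σ.prot → (η, ps, pr, v') ∈ σ.prot → v = v') ∧
  (∀ (p : P) (v : V) (τ τ' : T),
      (p, v, τ) ∈ σ.atlog → (p, v, τ') ∈ σ.atlog → τ = τ')

theorem IFinv_step {P V T H : Type} {F : P → V → T} {σ σ' : IFState P V T H}
    {e : SEvent P V T H} (h : SStep F σ e σ') (hi : IFInv σ) : IFInv σ' := by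
  obtain ⟨h1, h2⟩ := hi
  cases h with
  | attest_new p v habs =>
    refine ⟨h1, ?_⟩
    intro a w τ τ' ha hb
    rcases ha with ha | ha <;> rcases hb with hb | hb
    · rw [Prod.ext_iff] at ha hb; simp_all
    · exfalso; cases ha; exact habs _ hb
    · exfalso; cases hb; exact habs _ ha
    · exact h2 a w τ τ' ha hb
  | protect ps pr v η hfresh =>
    refine ⟨?_, h2⟩
    intro η' a b w w' ha hb
    rcases ha with ha | ha <;> rcases hb with hb | hb
    · rw [Prod.ext_iff] at ha hb; simp_all
    · exfalso; cases ha; exact hfresh _ _ _ hb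
    · exfalso; cases hb; exact hfresh _ _ _ ha
    · exact h1 η' a b w w' ha hb
  | attest_old => exact ⟨h1, h2⟩
  | check => exact ⟨h1, h2⟩
  | retrieve_some => exact ⟨h1, h2⟩
  | retrieve_fail => exact ⟨h1, h2⟩

theorem IFinv_beh {P V T H : Type} {F : P → V → T} {σ σ' : IFState P V T H}
    {es : List (SEvent P V T H)} (h : SBehavior F σ es σ') (hi : IFInv σ) : IFInv σ' := by
  induction h with
  | nil => exact hi
  | cons hs _ ih => exact ih (IFinv_step hs hi)

/-- in any state reachable by an IF behavior from the empty tables,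
`protstore` and `atlog` are partial functions on their indices. -/
theorem reachable_partial_function
    {P V T H : Type} (F : P → V → T)
    (σ : IFState P V T H) (es : List (SEvent P V T H))
    (hβ : SBehavior F ⟨∅, ∅⟩ es σ) :
    (∀ (η : H) (ps pr : P) (v v' : V),
        (η, ps, pr, v) ∈ σ.prot → (η, ps, pr, v') ∈ σ.prot → v = v') ∧
    (∀ (p : P) (v : V) (τ τ' : T),
        (p, v, τ) ∈ σ.atlog → (p, v, τ') ∈ σ.atlog → τ = τ') := by
  exact IFinv_beh hβ ⟨by simp, by simp⟩
end

section
/- Perfect escrow secrecy (combinatorial core): let α_ν be a schematic IF behavior in which variable ν occurs as the value argument of an iprotect(P_r, ν) event by P_s at position i with result handle η, and suppose no later event in α_ν is an iretrieve(P_s, η) executed by P_r. Then for every bitstring b of the unique length ℓ compatible with η, the substituted sequence α_ν[b/ν] is again a valid IF behavior. -/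
/-!
An escrowed value is observable only by its designated recipient: the only command that reads
`σ η ps pr` is `iretrieve ps η` executed by `pr`, and once the escrow at `(η, ps, pr)` is filled, no later
`iprotect` can reuse `η`. So two stores that differ only in the value escrowed at `(η, ps, pr)` admit
exactly the same continuations, provided that this recipient never retrieves it.
-/

namespace PState

variable {P H V : Type}

structure EqOffEscrow (η : H) (ps pr : P) (σ τ : PState P H V) : Prop where
  eq_of_ne : ∀ η' a b, ¬(η' = η ∧ a = ps ∧ b = pr) → σ η' a b = τ η' a b
  isSome : (σ η ps pr).isSome

variable [DecidableEq P] [DecidableEq H] {η : H} {ps pr : P}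

theorem eqOffEscrow_update (σ : PState P H V) (v w : V) :
    EqOffEscrow η ps pr
      (fun η' a b => if η' = η ∧ a = ps ∧ b = pr then some v else σ η' a b)
      (fun η' a b => if η' = η ∧ a = ps ∧ b = pr then some w else σ η' a b) where
  eq_of_ne η' a b h := by simp only [if_neg h]
  isSome := by simp

end PState

section

open PState

variable {P H V : Type} [DecidableEq P] [DecidableEq H] {η : H} {ps pr : P}

theorem PStep.exists_of_eqOffEscrow {σ σ' τ : PState P H V} {e : PEvent P H V}
    (hstep : PStep σ e σ') (hστ : EqOffEscrow η ps pr σ τ)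
    (he : ∀ r, e ≠ ⟨PCmd.iretrieve ps η, pr, r⟩) :
    ∃ τ', PStep τ e τ' ∧ EqOffEscrow η ps pr σ' τ' := by
  cases hstep with
  | protect ps' pr' v η' hfresh =>
    have hη : η' ≠ η := by
      rintro rfl
      simpa [hfresh ps pr] using hστ.isSome
    have hoff : ∀ a b, ¬(η' = η ∧ a = ps ∧ b = pr) := fun _ _ h => hη h.1
    refine ⟨_, PStep.protect τ ps' pr' v η' fun a b => ?_, ⟨fun η'' a b h => ?_, ?_⟩⟩
    · rw [← hστ.eq_of_ne η' a b (hoff a b)]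
      exact hfresh a b
    · split_ifs
      · rfl
      · exact hστ.eq_of_ne η'' a b h
    · simpa [Ne.symm hη] using hστ.isSome
  | retrieve_some ps' pr' η' v hv =>
    have hkey : ¬(η' = η ∧ ps' = ps ∧ pr' = pr) := by
      rintro ⟨rfl, rfl, rfl⟩
      exact he _ rfl
    exact ⟨τ, .retrieve_some τ ps' pr' η' v (hστ.eq_of_ne _ _ _ hkey ▸ hv), hστ⟩
  | retrieve_fail ps' pr' η' hv =>
    have hkey : ¬(η' = η ∧ ps' = ps ∧ pr' = pr) := by
      rintro ⟨rfl, rfl, rfl⟩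
      exact he _ rfl
    exact ⟨τ, .retrieve_fail τ ps' pr' η' (hστ.eq_of_ne _ _ _ hkey ▸ hv), hστ⟩

theorem PBehavior.exists_of_eqOffEscrow {σ σ'' τ : PState P H V} {es : List (PEvent P H V)}
    (hβ : PBehavior σ es σ'') (hστ : EqOffEscrow η ps pr σ τ)
    (hes : ∀ e ∈ es, ∀ r, e ≠ ⟨PCmd.iretrieve ps η, pr, r⟩) :
    ∃ τ'', PBehavior τ es τ'' := by
  induction hβ generalizing τ with
  | nil => exact ⟨τ, .nil τ⟩
  | cons hstep _ ih =>
    obtain ⟨τ', hτ', hσ'τ'⟩ := hstep.exists_of_eqOffEscrow hστ (hes _ List.mem_cons_self)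
    obtain ⟨τ'', hτ''⟩ := ih hσ'τ' fun e he => hes e (List.mem_cons_of_mem _ he)
    exact ⟨τ'', .cons hτ' hτ''⟩

theorem PBehavior.append_iff {σ σ'' : PState P H V} {l₁ l₂ : List (PEvent P H V)} :
    PBehavior σ (l₁ ++ l₂) σ'' ↔ ∃ σ', PBehavior σ l₁ σ' ∧ PBehavior σ' l₂ σ'' := by
  induction l₁ generalizing σ with
  | nil =>
    refine ⟨fun h => ⟨σ, .nil σ, h⟩, ?_⟩
    rintro ⟨σ', ⟨⟩, h⟩
    exact h
  | cons e l₁ ih =>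
    constructor
    · rintro (_ | ⟨hstep, hrest⟩)
      obtain ⟨σ', h₁, h₂⟩ := ih.mp hrest
      exact ⟨σ', .cons hstep h₁, h₂⟩
    · rintro ⟨σ', (_ | ⟨hstep, h₁⟩), h₂⟩
      exact .cons hstep (ih.mpr ⟨σ', h₁, h₂⟩)

theorem PBehavior.exists_of_replace_escrowed {σ σ'' : PState P H V}
    {l₁ l₂ : List (PEvent P H V)} {v : V}
    (hβ : PBehavior σ (l₁ ++ ⟨PCmd.iprotect pr v, ps, PRes.handle η⟩ :: l₂) σ'')
    (hl₂ : ∀ e ∈ l₂, ∀ r, e ≠ ⟨PCmd.iretrieve ps η, pr, r⟩) (w : V) :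
    ∃ τ, PBehavior σ (l₁ ++ ⟨PCmd.iprotect pr w, ps, PRes.handle η⟩ :: l₂) τ := by
  obtain ⟨σ₁, h₁, h₂⟩ := PBehavior.append_iff.mp hβ
  rcases h₂ with _ | ⟨⟨_, _, _, _, hfresh⟩, hrest⟩
  obtain ⟨τ, hτ⟩ := hrest.exists_of_eqOffEscrow (eqOffEscrow_update σ₁ v w) hl₂
  exact ⟨τ, PBehavior.append_iff.mpr ⟨σ₁, h₁, .cons (.protect σ₁ ps pr w η hfresh) hτ⟩⟩

end

theorem escrow_secrecy_substitution_general
    {P H : Type} [DecidableEq P] [DecidableEq H]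
    (es : List (PEvent P H (List Bool))) (σfin : PState P H (List Bool))
    (hβ : PBehavior (fun _ _ _ => none) es σfin)
    (i : ℕ) (hi : i < es.length) (ps pr : P) (v0 : List Bool) (η : H)
    (hev : es[i]'hi = ⟨PCmd.iprotect pr v0, ps, PRes.handle η⟩)
    (hnr : ∀ j (hj : j < es.length), i < j →
      ∀ r, es[j]'hj ≠ ⟨PCmd.iretrieve ps η, pr, r⟩)
    (b : List Bool) :
    ∃ σ' : PState P H (List Bool),
      PBehavior (fun _ _ _ => none)
        (es.set i ⟨PCmd.iprotect pr b, ps, PRes.handle η⟩) σ' := by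
  have hsplit : es = es.take i ++ es[i] :: es.drop (i + 1) := by
    rw [← List.drop_eq_getElem_cons hi, List.take_append_drop]
  have hlater : ∀ e ∈ es.drop (i + 1), ∀ r, e ≠ ⟨PCmd.iretrieve ps η, pr, r⟩ := by
    intro e he r
    obtain ⟨j, hj, rfl⟩ := List.mem_drop_iff_getElem.mp he
    exact hnr _ _ (by omega) r
  rw [hsplit, hev] at hβ
  rw [List.set_eq_take_append_cons_drop, if_pos hi]
  exact hβ.exists_of_replace_escrowed hlater b

/-- perfect escrow secrecy (combinatorial core).  If a behavior contains an
`iprotect pr v₀` by `ps` at position `i` with result handle `η`, and no later event is an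
`iretrieve ps η` executed by `pr`, then replacing the escrowed value `v₀` by any bitstring
`b` of the same length yields again a valid IF behavior. -/
theorem escrow_secrecy_substitution
    {P H : Type} [DecidableEq P] [DecidableEq H]
    (es : List (PEvent P H (List Bool))) (σfin : PState P H (List Bool))
    (hβ : PBehavior (fun _ _ _ => none) es σfin)
    (i : ℕ) (hi : i < es.length) (ps pr : P) (v0 : List Bool) (η : H)
    (hev : es[i]'hi = ⟨PCmd.iprotect pr v0, ps, PRes.handle η⟩)
    (hnr : ∀ j (hj : j < es.length), i < j →
      ∀ r, es[j]'hj ≠ ⟨PCmd.iretrieve ps η, pr, r⟩)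
    (b : List Bool) (hlen : b.length = v0.length) :
    ∃ σ' : PState P H (List Bool),
      PBehavior (fun _ _ _ => none)
        (es.set i ⟨PCmd.iprotect pr b, ps, PRes.handle η⟩) σ' :=
  escrow_secrecy_substitution_general es σfin hβ i hi ps pr v0 η hev hnr b
end

section
/- Trust chain provenance: in an IF behavior where every compliant service, upon retrieving a record carrying trust chain (h :: h_s :: tr), verifies that h is its own hash and h_s is the source's hash, and upon protecting a record for recipient h_r pushes h_r onto its own chain, it follows by induction that if the first n entries of a retrieved trust chain are all hashes of compliant services, then for each k < n the (k+1)-st entry is the hash of the service that actually protected the record retrieved by the service at entry k. -/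
/-- trust chain provenance.
`Protected src rcv ch` means service `src` executed a protect (escrow) with intended
recipient `rcv`, storing a record whose trust chain is `ch`; `Retrieved r s ch` means
service `r` successfully retrieved, naming expected source `s`, a record with trust chain
`ch`.  Hypotheses:
* `auth` (escrow authentication lemma): a successful retrieve naming source `s` means the
  record really was protected by `s` for the retriever, with the same chain;
* `disc` (compliant discipline): a compliant service `h`, when protecting a record for
  `rcv`, stores the chain `rcv :: h :: tail` obtained by pushing `rcv` onto its own chain
  `h :: tail`; and if `tail` is nonempty, with head `s`, then `h` had itself retrieved the
  record carrying chain `h :: s :: tr` while naming expected source `s` (having checked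
  that its own hash is first and the source's hash second).
Conclusion: if a service retrieves a record with chain `ch` and the first `n` entries of
`ch` are hashes of compliant services, then for each `k < n` the `(k+1)`-st entry of `ch`
is the hash of the service that actually protected the record retrieved by the service at
entry `k` — that record carrying the chain `ch.drop k`. -/
theorem trust_chain_provenance
    {Hash : Type}
    (compliant : Hash → Prop)
    (Protected' : Hash → Hash → List Hash → Prop)
    (Retrieved : Hash → Hash → List Hash → Prop)
    (auth : ∀ r s ch, Retrieved r s ch → Protected' s r ch)
    (disc : ∀ h, compliant h → ∀ rcv ch, Protected' h rcv ch →
      ∃ tail, ch = rcv :: h :: tail ∧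
        (∀ s tr, tail = s :: tr → Retrieved h s (h :: s :: tr)))
    (ch : List Hash) (h0 h1 : Hash)
    (hret : Retrieved h0 h1 ch)
    (hch : ∃ rest, ch = h0 :: h1 :: rest)
    (n : ℕ)
    (hcomp : ∀ k, k < n → ∀ (hk : k < ch.length), compliant (ch[k]'hk)) :
    ∀ k, k < n → ∀ (hk1 : k + 1 < ch.length),
      Retrieved (ch[k]'(Nat.lt_of_succ_lt hk1)) (ch[k+1]'hk1) (ch.drop k) ∧
      Protected' (ch[k+1]'hk1) (ch[k]'(Nat.lt_of_succ_lt hk1)) (ch.drop k) := by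

  have key : ∀ k, k < n → ∀ (hk1 : k + 1 < ch.length),
      Retrieved (ch[k]'(Nat.lt_of_succ_lt hk1)) (ch[k+1]'hk1) (ch.drop k) := by
    intro k
    induction k with
    | zero =>
      intro _ hk1
      obtain ⟨rest, hrest⟩ := hch
      subst hrest
      simpa using hret
    | succ k ih =>
      intro hkn hk1
      have hkn' : k < n := Nat.lt_of_succ_lt hkn
      have hk1' : k + 1 < ch.length := Nat.lt_of_succ_lt hk1
      have hR := ih hkn' hk1'
      have hP := auth _ _ _ hR
      have hc : compliant (ch[k+1]'hk1') := hcomp (k + 1) hkn hk1'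
      obtain ⟨tail, heq, hcond⟩ := disc _ hc _ _ hP
      have hdrop : ch.drop k = ch[k]'(Nat.lt_of_succ_lt hk1') :: ch[k+1]'hk1' :: ch.drop (k+2) := by
        rw [List.drop_eq_getElem_cons (Nat.lt_of_succ_lt hk1'),
            List.drop_eq_getElem_cons hk1']
      rw [hdrop] at heq
      obtain ⟨_, htail⟩ : _ ∧ tail = ch.drop (k + 2) := by
        have := heq
        injection this with h1 h2
        injection h2 with h3 h4
        exact ⟨h3, h4.symm⟩
      have hdrop2 : ch.drop (k + 2) = ch[k+2]'hk1 :: ch.drop (k+3) :=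
        List.drop_eq_getElem_cons hk1
      have hRet := hcond (ch[k+2]'hk1) (ch.drop (k+3)) (htail.trans hdrop2)
      have hdrop1 : ch.drop (k + 1) = ch[k+1]'hk1' :: ch[k+2]'hk1 :: ch.drop (k+3) := by
        rw [List.drop_eq_getElem_cons hk1', hdrop2]
      rw [hdrop1]
      exact hRet
  intro k hkn hk1
  exact ⟨key k hkn hk1, auth _ _ _ (key k hkn hk1)⟩
end
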